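/- arXiv:2308.14110 — 2 statements merged into one kernel-verified Lean document; each statement's English description precedes it below -/
import Mathlib

section
/- For every pair of quaternions q, p ∈ ℍ and γ > 0, the slice hyperholomorphic RBF kernel satisfies the diagonal identity K_{γ,S}(q,q) = exp(4 y²/γ²) where q = x + I y with x, y real and I an imaginary unit quaternion; that is, exp(-q²/γ²) · (Σ_{n=0}^∞ (2/γ²)ⁿ qⁿ conj(q)ⁿ / n!) · exp(-conj(q)²/γ²) = exp(-(q - conj(q))²/γ²). -/
/-!
Since `q` commutes with `star q` and `γ` is real, everything in sight commutes: the series is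
`exp (2 / γ² * q * star q)`, and the product of the three exponentials is the exponential of
`(-q² + 2 q q̄ - q̄²) / γ² = -(q - q̄)² / γ²`. From `I² = -1`, multiplicativity of the norm gives
`‖I‖ = 1`, so `I² = -‖I‖²` and `I` is purely imaginary; hence `q - q̄ = 2yI` and `-(q - q̄)² = 4y²`.
-/

open Quaternion

section DivisionAlgebra

open NormedSpace

variable {𝔸 : Type*} [NormedDivisionRing 𝔸] [NormedAlgebra ℚ 𝔸] [CompleteSpace 𝔸] {a b d : 𝔸}

theorem Commute.hasSum_pow_mul_pow_div_factorial (hab : Commute a b) :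
    HasSum (fun n : ℕ => a ^ n * b ^ n / n.factorial) (NormedSpace.exp (a * b)) := by
  simpa only [hab.mul_pow] using expSeries_div_hasSum_exp (a * b)

theorem exp_neg_sq_div_mul_exp_mul_exp_neg_sq_div (hab : Commute a b) (had : Commute a d)
    (hbd : Commute b d) :
    exp (-a ^ 2 / d) * exp (2 / d * a * b) * exp (-b ^ 2 / d) = exp (-(a - b) ^ 2 / d) := by
  have comm : ∀ u, Commute a u → Commute b u → Commute d u →
      Commute (-a ^ 2 / d) u ∧ Commute (2 / d * a * b) u ∧ Commute (-b ^ 2 / d) u :=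
    fun u ha hb hd => ⟨(ha.pow_left 2).neg_left.div_left hd,
      (((Commute.ofNat_left 2 u).div_left hd).mul_left ha).mul_left hb,
      (hb.pow_left 2).neg_left.div_left hd⟩
  obtain ⟨-, hya, hza⟩ := comm a (.refl a) hab.symm had.symm
  obtain ⟨-, hyb, hzb⟩ := comm b hab (.refl b) hbd.symm
  obtain ⟨-, hyd, hzd⟩ := comm d had hbd (.refl d)
  have hxy := (comm _ hya.symm hyb.symm hyd.symm).1
  have hxz := (comm _ hza.symm hzb.symm hzd.symm).1
  have hyz := (comm _ hza.symm hzb.symm hzd.symm).2.1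
  have hmid : 2 * a * b / d = 2 / d * a * b := by
    rw [div_eq_mul_inv, div_eq_mul_inv, mul_assoc (2 * a), hbd.inv_right₀.eq, ← mul_assoc,
      mul_assoc 2, had.inv_right₀.eq, ← mul_assoc]
  have hsq : -(a - b) ^ 2 / d = -a ^ 2 / d + 2 / d * a * b + -b ^ 2 / d := by
    rw [hab.sub_sq, ← hmid]
    simp only [div_eq_mul_inv]
    noncomm_ring
  rw [hsq, exp_add_of_commute (hxz.add_left hyz), exp_add_of_commute hxy]

end DivisionAlgebra

namespace Quaternion

theorem re_eq_zero_of_sq_eq_neg_one {a : ℍ} (ha : a ^ 2 = -1) : a.re = 0 := by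
  have hn : normSq a = 1 := by
    have : normSq a ^ 2 = 1 := by rw [← map_pow, ha, normSq_neg, map_one]
    exact (pow_eq_one_iff_of_nonneg normSq_nonneg two_ne_zero).mp this
  exact sq_eq_neg_normSq.mp (by rw [ha, hn, coe_one])

theorem neg_sq_sub_star_of_sq_eq_neg_one {I : ℍ} (hI : I ^ 2 = -1) (x y : ℝ) :
    -((x + y * I : ℍ) - star (x + y * I)) ^ 2 = ((4 * y ^ 2 : ℝ) : ℍ) := by
  have hI' : star I = -I := star_eq_neg.mpr (re_eq_zero_of_sq_eq_neg_one hI)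
  have : ((x + y * I : ℍ) - star (x + y * I)) = (2 * y : ℝ) * I := by
    rw [star_add, star_mul, hI', star_coe, star_coe, neg_mul, ← (coe_commute y I).eq,
      two_mul, coe_add, add_mul]
    abel
  rw [this, (coe_commute _ I).mul_pow, hI, ← coe_pow, mul_neg_one, neg_neg]
  congr 1
  ring

end Quaternion

open NormedSpace in
theorem slice_rbf_kernel_diagonal_general (γ : ℝ) (q : Quaternion ℝ)
    (x y : ℝ) (I : Quaternion ℝ) (hI : I ^ 2 = -1) (hq : q = (x : Quaternion ℝ) + (y : Quaternion ℝ) * I) :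
    NormedSpace.exp (-q ^ 2 / ((γ : Quaternion ℝ)) ^ 2) *
        (∑' n : ℕ, (2 / (γ : Quaternion ℝ) ^ 2) ^ n * q ^ n * (star q) ^ n /
          ((n.factorial : ℝ) : Quaternion ℝ)) *
        NormedSpace.exp (-(star q) ^ 2 / ((γ : Quaternion ℝ)) ^ 2) =
      NormedSpace.exp (-(q - star q) ^ 2 / ((γ : Quaternion ℝ)) ^ 2) ∧
    NormedSpace.exp (-(q - star q) ^ 2 / ((γ : Quaternion ℝ)) ^ 2) =
      ((Real.exp (4 * y ^ 2 / γ ^ 2) : ℝ) : Quaternion ℝ) := by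
  refine ⟨?_, ?_⟩
  -- `exp_add_of_commute` needs a `NormedAlgebra ℚ ℍ` instance, which is not global.
  · let +nondep : NormedAlgebra ℚ ℍ := .restrictScalars ℚ ℝ ℍ
    have hγ (z : ℍ) : Commute z ((γ : ℍ) ^ 2) := ((coe_commute γ z).pow_left 2).symm
    have hc (z : ℍ) : Commute (2 / (γ : ℍ) ^ 2) z := (Commute.ofNat_left 2 z).div_left (hγ z).symm
    have hq' : Commute q (star q) := (star_comm_self' q).symm
    have hsum : HasSum (fun n : ℕ => (2 / (γ : ℍ) ^ 2) ^ n * q ^ n * star q ^ n /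
        ((n.factorial : ℝ) : ℍ)) (exp (2 / (γ : ℍ) ^ 2 * q * star q)) := by
      simpa only [coe_natCast, (hc q).mul_pow] using
        ((hc (star q)).mul_left hq').hasSum_pow_mul_pow_div_factorial
    rw [hsum.tsum_eq, exp_neg_sq_div_mul_exp_mul_exp_neg_sq_div hq' (hγ q) (hγ (star q))]
  · subst hq
    rw [neg_sq_sub_star_of_sq_eq_neg_one hI, ← coe_pow, ← coe_div, exp_coe, Real.exp_eq_exp_ℝ]

/-- Diagonal identity for the slice hyperholomorphic RBF kernel:
`K_{γ,S}(q,q) = exp(-(q - conj q)²/γ²)`, and for `q = x + I y` with `I² = -1` this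
equals `exp(4y²/γ²)`. -/
theorem slice_rbf_kernel_diagonal (γ : ℝ) (hγ : 0 < γ) (q : Quaternion ℝ)
    (x y : ℝ) (I : Quaternion ℝ) (hI : I ^ 2 = -1) (hq : q = (x : Quaternion ℝ) + (y : Quaternion ℝ) * I) :
    NormedSpace.exp (-q ^ 2 / ((γ : Quaternion ℝ)) ^ 2) *
        (∑' n : ℕ, (2 / (γ : Quaternion ℝ) ^ 2) ^ n * q ^ n * (star q) ^ n /
          ((n.factorial : ℝ) : Quaternion ℝ)) *
        NormedSpace.exp (-(star q) ^ 2 / ((γ : Quaternion ℝ)) ^ 2) =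
      NormedSpace.exp (-(q - star q) ^ 2 / ((γ : Quaternion ℝ)) ^ 2) ∧
    NormedSpace.exp (-(q - star q) ^ 2 / ((γ : Quaternion ℝ)) ^ 2) =
      ((Real.exp (4 * y ^ 2 / γ ^ 2) : ℝ) : Quaternion ℝ) :=
  slice_rbf_kernel_diagonal_general γ q x y I hI hq
end

section
/- For γ > 0 and quaternions q, p ∈ ℍ, the slice hyperholomorphic RBF kernel admits the expansion K_{γ,S}(q,p) = Σ_{n=0}^∞ e_n^γ(q) e_n^γ(conj(p)), where e_n^γ(q) = √(2ⁿ/(γ^{2n} n!)) qⁿ exp(-q²/γ²) and exp and powers are taken in the quaternions (note q and functions of q commute, and similarly for conj(p)). -/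
/-!
Since `qⁿ` commutes with `exp(-q²/γ²)` and real scalars are central in `ℍ`, the `n`-th term
`eₙ(q) eₙ(p̄)` is `exp(-q²/γ²) · ((2/γ²)ⁿ/n!) qⁿ p̄ⁿ · exp(-p̄²/γ²)`: the square root in the
normalisation of `eₙ` squares away. The middle series converges absolutely, being dominated by
the exponential series of `(2/γ²)‖q‖‖p‖`, so multiplying it on both sides by the two exponentials
gives the expansion.
-/

open Quaternion NormedSpace

/-- The slice hyperholomorphic RBF basis functions
`eₙ^γ(q) = √(2ⁿ/(γ^{2n} n!)) qⁿ exp(-q²/γ²)`. -/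
noncomputable def sliceRBFBasis (γ : ℝ) (n : ℕ) (q : Quaternion ℝ) : Quaternion ℝ :=
  ((Real.sqrt (2 ^ n / (γ ^ (2 * n) * n.factorial)) : ℝ) : Quaternion ℝ) * q ^ n *
    NormedSpace.exp (-q ^ 2 / ((γ : Quaternion ℝ)) ^ 2)

theorem summable_smul_pow_mul_pow_div_factorial {A : Type*} [NormedRing A] [NormOneClass A]
    [NormedAlgebra ℝ A] [CompleteSpace A] (c : ℝ) (x y : A) :
    Summable fun n : ℕ => (c ^ n / n.factorial) • (x ^ n * y ^ n) := by
  refine .of_norm_bounded (Real.summable_pow_div_factorial (|c| * ‖x‖ * ‖y‖)) fun n => ?_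
  rw [norm_smul, Real.norm_eq_abs, abs_div, abs_pow, Nat.abs_cast, mul_pow, mul_pow,
    div_mul_eq_mul_div, mul_assoc]
  gcongr
  exact (norm_mul_le _ _).trans (mul_le_mul (norm_pow_le _ _) (norm_pow_le _ _)
    (norm_nonneg _) (by positivity))

namespace Quaternion

theorem commute_pow_exp_neg_sq_div (γ : ℝ) (q : ℍ) (n : ℕ) :
    Commute (q ^ n) (exp (-q ^ 2 / (γ : ℍ) ^ 2)) := by
  refine Commute.exp_right ?_
  rw [div_eq_mul_inv, ← coe_pow, ← coe_inv]
  exact ((Commute.refl q).pow_pow n 2).neg_right.mul_right (coe_commute _ _).symm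

theorem div_sq_pow_mul_div_factorial (γ : ℝ) (n : ℕ) (x : ℍ) :
    (2 / (γ : ℍ) ^ 2) ^ n * x / ((n.factorial : ℝ) : ℍ) =
      ((2 / γ ^ 2) ^ n / n.factorial : ℝ) • x := by
  have h2 : ((2 : ℝ) : ℍ) = 2 := by norm_cast
  rw [← h2, ← coe_pow, ← coe_div, ← coe_pow, coe_mul_eq_smul, div_eq_mul_inv, ← coe_inv,
    mul_coe_eq_smul, smul_smul, inv_mul_eq_div]

end Quaternion

theorem sliceRBFBasis_eq_smul (γ : ℝ) (n : ℕ) (q : ℍ) :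
    sliceRBFBasis γ n q =
      Real.sqrt (2 ^ n / (γ ^ (2 * n) * n.factorial)) • (q ^ n * exp (-q ^ 2 / (γ : ℍ) ^ 2)) := by
  rw [sliceRBFBasis, coe_mul_eq_smul, smul_mul_assoc]

theorem sliceRBFBasis_mul_sliceRBFBasis (γ : ℝ) (n : ℕ) (q p : ℍ) :
    sliceRBFBasis γ n q * sliceRBFBasis γ n p =
      ((2 / γ ^ 2) ^ n / n.factorial : ℝ) •
        (exp (-q ^ 2 / (γ : ℍ) ^ 2) * (q ^ n * p ^ n) * exp (-p ^ 2 / (γ : ℍ) ^ 2)) := by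
  have hcoeff : Real.sqrt (2 ^ n / (γ ^ (2 * n) * n.factorial)) *
      Real.sqrt (2 ^ n / (γ ^ (2 * n) * n.factorial)) = (2 / γ ^ 2) ^ n / n.factorial := by
    rw [pow_mul, Real.mul_self_sqrt (by positivity), div_pow, div_div]
  rw [sliceRBFBasis_eq_smul, sliceRBFBasis_eq_smul, smul_mul_smul_comm, hcoeff,
    (commute_pow_exp_neg_sq_div γ q n).eq, mul_assoc, mul_assoc, mul_assoc]

theorem slice_rbf_kernel_expansion_general (γ : ℝ) (q p : Quaternion ℝ) :
    HasSum (fun n : ℕ => sliceRBFBasis γ n q * sliceRBFBasis γ n (star p))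
      (NormedSpace.exp (-q ^ 2 / ((γ : Quaternion ℝ)) ^ 2) *
        (∑' n : ℕ, (2 / (γ : Quaternion ℝ) ^ 2) ^ n * q ^ n * (star p) ^ n /
          ((n.factorial : ℝ) : Quaternion ℝ)) *
        NormedSpace.exp (-(star p) ^ 2 / ((γ : Quaternion ℝ)) ^ 2)) := by
  simp only [mul_assoc _ (q ^ _), div_sq_pow_mul_div_factorial]
  refine (((summable_smul_pow_mul_pow_div_factorial (2 / γ ^ 2) q (star p)).hasSum.mul_left
    (exp (-q ^ 2 / (γ : ℍ) ^ 2))).mul_right (exp (-(star p) ^ 2 / (γ : ℍ) ^ 2))).congr_fun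
    fun n => ?_
  rw [sliceRBFBasis_mul_sliceRBFBasis, mul_smul_comm, smul_mul_assoc]

/-- Expansion of the slice hyperholomorphic RBF kernel:
`K_{γ,S}(q,p) = Σₙ eₙ^γ(q) eₙ^γ(conj p)`. -/
theorem slice_rbf_kernel_expansion (γ : ℝ) (hγ : 0 < γ) (q p : Quaternion ℝ) :
    HasSum (fun n : ℕ => sliceRBFBasis γ n q * sliceRBFBasis γ n (star p))
      (NormedSpace.exp (-q ^ 2 / ((γ : Quaternion ℝ)) ^ 2) *
        (∑' n : ℕ, (2 / (γ : Quaternion ℝ) ^ 2) ^ n * q ^ n * (star p) ^ n /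
          ((n.factorial : ℝ) : Quaternion ℝ)) *
        NormedSpace.exp (-(star p) ^ 2 / ((γ : Quaternion ℝ)) ^ 2)) :=
  slice_rbf_kernel_expansion_general γ q p
end
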